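/- Let C be a linear code over a finite field F (a nonzero F-linear subspace of F^n) with minimum Hamming distance d, and let W_d = { w ∈ C : wt(w) = d } be the set of codewords of minimum weight d. Then C is spanned (as an F-vector space) by W_d if and only if the minimum-distance graph G(C) (vertices are codewords of C, with distinct codewords adjacent iff their Hamming distance is at most d) is connected. -/

import Mathlib

/-- The α-distance graph of a code `C ⊆ F^n`: vertices are codewords, and two
distinct codewords are adjacent iff their Hamming distance is at most `α`. -/
def distGraph {F : Type*} [DecidableEq F] {n : ℕ} (C : Set (Fin n → F)) (α : ℕ) :
    SimpleGraph C where
  Adj c₁ c₂ := c₁ ≠ c₂ ∧ hammingDist (c₁ : Fin n → F) (c₂ : Fin n → F) ≤ α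
  symm := ⟨fun _ _ h => ⟨h.1.symm, by rw [hammingDist_comm]; exact h.2⟩⟩
  loopless := ⟨fun _ h => h.1 rfl⟩

/-- A nonzero linear code `C` with minimum distance `d` (the minimum Hamming weight
of a nonzero codeword) is spanned by its minimum-weight codewords if and only if its
minimum-distance graph is connected. -/
theorem linear_code_span_minWeight_iff_minDistGraph_connected
    {F : Type*} [Field F] [Fintype F] [DecidableEq F]
    {n d : ℕ} (C : Submodule F (Fin n → F)) (hC : C ≠ ⊥)
    (hlb : ∀ w ∈ C, w ≠ 0 → d ≤ hammingNorm w)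
    (hex : ∃ w ∈ C, w ≠ 0 ∧ hammingNorm w = d) :
    Submodule.span F {w : Fin n → F | w ∈ C ∧ hammingNorm w = d} = C ↔
      (distGraph (C : Set (Fin n → F)) d).Connected := by
  classical
  set G := distGraph (C : Set (Fin n → F)) d with hG
  have hd_pos : 0 < d := by
    obtain ⟨w, hwC, hw0, hwd⟩ := hex
    rcases Nat.eq_zero_or_pos d with h | h
    · exact absurd (hammingNorm_eq_zero.mp (hwd.trans h)) hw0
    · exact h
  have hzero : (0 : Fin n → F) ∈ (C : Set (Fin n → F)) := C.zero_mem
  -- translation invariance of reachability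
  have shift : ∀ (t : Fin n → F) (ht : t ∈ C),
      ∀ u v : (C : Set (Fin n → F)), G.Reachable u v →
        G.Reachable ⟨(u : Fin n → F) + t, C.add_mem u.2 ht⟩
          ⟨(v : Fin n → F) + t, C.add_mem v.2 ht⟩ := by
    intro t ht u v h
    let f : G →g G :=
      { toFun := fun w => ⟨(w : Fin n → F) + t, C.add_mem w.2 ht⟩
        map_rel' := by
          rintro a b (⟨hne, hdist⟩ : _ ≠ _ ∧ _)
          refine (⟨?_, ?_⟩ : _ ≠ _ ∧ _)
          · intro hab
            apply hne
            have := congrArg Subtype.val hab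
            simp only at this
            exact Subtype.ext (add_right_cancel this)
          · simpa [hammingDist] using hdist }
    exact h.map f
  -- scaling invariance of reachability
  have scale : ∀ (a : F), a ≠ 0 →
      ∀ u v : (C : Set (Fin n → F)), G.Reachable u v →
        G.Reachable ⟨a • (u : Fin n → F), C.smul_mem a u.2⟩
          ⟨a • (v : Fin n → F), C.smul_mem a v.2⟩ := by
    intro a ha u v h
    have hreg : ∀ i : Fin n, IsSMulRegular F a := fun _ => smul_right_injective F ha
    let f : G →g G :=
      { toFun := fun w => ⟨a • (w : Fin n → F), C.smul_mem a w.2⟩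
        map_rel' := by
          rintro b c (⟨hne, hdist⟩ : _ ≠ _ ∧ _)
          refine (⟨?_, ?_⟩ : _ ≠ _ ∧ _)
          · intro hbc
            apply hne
            have := congrArg Subtype.val hbc
            simp only at this
            exact Subtype.ext (smul_right_injective (Fin n → F) ha this)
          · rw [hammingDist_smul hreg]
            exact hdist }
    exact h.map f
  constructor
  · -- span = C → connected
    intro hspan
    have reach0 : ∀ (x : Fin n → F) (hx : x ∈ C),
        G.Reachable ⟨x, hx⟩ ⟨0, hzero⟩ := by
      intro x hx
      have hx' : x ∈ Submodule.span F {w : Fin n → F | w ∈ C ∧ hammingNorm w = d} := by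
        rw [hspan]; exact hx
      refine Submodule.span_induction
        (p := fun y _ => ∃ hy : y ∈ C, G.Reachable ⟨y, hy⟩ ⟨0, hzero⟩)
        ?_ ?_ ?_ ?_ hx' |>.choose_spec
      · rintro w ⟨hwC, hwd⟩
        have hw0 : w ≠ 0 := by
          intro h; rw [h, hammingNorm_zero] at hwd; omega
        refine ⟨hwC, SimpleGraph.Adj.reachable (⟨?_, ?_⟩ : _ ≠ _ ∧ _)⟩
        · intro h
          exact hw0 (congrArg Subtype.val h)
        · rw [hammingDist_zero_right, hwd]
      · exact ⟨C.zero_mem, SimpleGraph.Reachable.refl _⟩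
      · rintro y z _ _ ⟨hyC, hy⟩ ⟨hzC, hz⟩
        refine ⟨C.add_mem hyC hzC, ?_⟩
        have h1 := shift z hzC ⟨y, hyC⟩ ⟨0, hzero⟩ hy
        have h2 : (⟨(0 : Fin n → F) + z, C.add_mem hzero hzC⟩ : (C : Set (Fin n → F)))
            = ⟨z, hzC⟩ := Subtype.ext (zero_add z)
        rw [h2] at h1
        exact h1.trans hz
      · rintro a y _ ⟨hyC, hy⟩
        rcases eq_or_ne a 0 with rfl | ha
        · refine ⟨C.smul_mem 0 hyC, ?_⟩
          have : (⟨(0 : F) • y, C.smul_mem 0 hyC⟩ : (C : Set (Fin n → F)))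
              = ⟨0, hzero⟩ := Subtype.ext (zero_smul F y)
          rw [this]
        · refine ⟨C.smul_mem a hyC, ?_⟩
          have h1 := scale a ha ⟨y, hyC⟩ ⟨0, hzero⟩ hy
          have h2 : (⟨a • (0 : Fin n → F), C.smul_mem a hzero⟩ : (C : Set (Fin n → F)))
              = ⟨0, hzero⟩ := Subtype.ext (smul_zero a)
          rwa [h2] at h1
    haveI : Nonempty (C : Set (Fin n → F)) := ⟨⟨0, hzero⟩⟩
    exact SimpleGraph.Connected.mk
      (fun u v => (reach0 u u.2).trans (reach0 v v.2).symm)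
  · -- connected → span = C
    intro hconn
    apply le_antisymm
    · rw [Submodule.span_le]
      rintro w ⟨hwC, _⟩
      exact hwC
    · intro x hx
      have walkmem : ∀ (u v : (C : Set (Fin n → F))), G.Walk u v →
          (u : Fin n → F) ∈ Submodule.span F {w : Fin n → F | w ∈ C ∧ hammingNorm w = d} →
          (v : Fin n → F) ∈ Submodule.span F {w : Fin n → F | w ∈ C ∧ hammingNorm w = d} := by
        intro u v p
        induction p with
        | nil => exact id
        | cons hadj q ih =>
          rename_i a b c
          intro ha
          apply ih
          obtain ⟨hne, hdist⟩ := (hadj : _ ≠ _ ∧ _)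
          have hsub : (b : Fin n → F) - (a : Fin n → F) ∈ C := C.sub_mem b.2 a.2
          have hne' : (b : Fin n → F) - (a : Fin n → F) ≠ 0 := by
            intro h
            exact hne (Subtype.ext (sub_eq_zero.mp h)).symm
          have hle : hammingNorm ((b : Fin n → F) - (a : Fin n → F)) ≤ d := by
            rwa [sub_eq_neg_add, ← hammingDist_eq_hammingNorm]
          have hge := hlb _ hsub hne'
          have heq : hammingNorm ((b : Fin n → F) - (a : Fin n → F)) = d := le_antisymm hle hge
          have hb : (b : Fin n → F) = (a : Fin n → F) + ((b : Fin n → F) - (a : Fin n → F)) := by ring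
          rw [hb]
          exact Submodule.add_mem _ ha (Submodule.subset_span ⟨hsub, heq⟩)
      obtain ⟨p⟩ := hconn.preconnected ⟨0, hzero⟩ ⟨x, hx⟩
      exact walkmem _ _ p (Submodule.zero_mem _)
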